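/- arXiv:1910.13393 — 3 statements merged into one kernel-verified Lean document; each statement's English description precedes it below -/
import Mathlib

section
/- Let S and A be measurable spaces, let μ, ν be finite measures on S, let π and π' be Markov kernels from S to A, and suppose there is ε ≥ 0 such that for every s ∈ S the total variation distance between the measures π(s) and π'(s) on A is at most ε. Then the total variation distance between the joint measures μ ⊗ π and ν ⊗ π' on S × A satisfies ‖μ ⊗ π − ν ⊗ π'‖_TV ≤ ε·μ(S) + ‖μ − ν‖_TV; in particular, if μ is a probability measure, ‖μ ⊗ π − ν ⊗ π'‖_TV ≤ ε + ‖μ − ν‖_TV. -/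
open MeasureTheory ProbabilityTheory

/-- The total variation distance between two finite measures: the total
variation norm of the signed measure `μ - ν`. -/
noncomputable def tvDist {X : Type*} [MeasurableSpace X]
    (μ ν : Measure X) [IsFiniteMeasure μ] [IsFiniteMeasure ν] : ℝ :=
  ((μ.toSignedMeasure - ν.toSignedMeasure).totalVariation Set.univ).toReal

section Helpers

variable {X : Type*} [MeasurableSpace X]

lemma aux_apply (μ ν : Measure X) [IsFiniteMeasure μ] [IsFiniteMeasure ν]
    {B : Set X} (hB : MeasurableSet B) :
    (μ B).toReal - (ν B).toReal =
      (((μ.toSignedMeasure - ν.toSignedMeasure).toJordanDecomposition.posPart B).toReal -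
       ((μ.toSignedMeasure - ν.toSignedMeasure).toJordanDecomposition.negPart B).toReal) := by
  set s := μ.toSignedMeasure - ν.toSignedMeasure with hs
  have h1 : s B = (μ B).toReal - (ν B).toReal := Measure.toSignedMeasure_sub_apply hB
  have h2 : s.toJordanDecomposition.toSignedMeasure = s :=
    SignedMeasure.toSignedMeasure_toJordanDecomposition s
  have h3 : s.toJordanDecomposition.toSignedMeasure B =
      (s.toJordanDecomposition.posPart B).toReal -
      (s.toJordanDecomposition.negPart B).toReal := by
    rw [JordanDecomposition.toSignedMeasure, Measure.toSignedMeasure_sub_apply hB]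
    rfl
  rw [← h1, ← h3, h2]

lemma tvDist_ge (μ ν : Measure X) [IsFiniteMeasure μ] [IsFiniteMeasure ν]
    {B : Set X} (hB : MeasurableSet B) :
    (μ B).toReal - (ν B).toReal + ((ν Bᶜ).toReal - (μ Bᶜ).toReal) ≤ tvDist μ ν := by
  set s := μ.toSignedMeasure - ν.toSignedMeasure with hs
  set p := s.toJordanDecomposition.posPart with hp
  set n := s.toJordanDecomposition.negPart with hn
  have h1 := aux_apply μ ν hB
  have h2 := aux_apply μ ν hB.compl
  have hpfin : p B ≠ ⊤ := measure_ne_top _ _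
  have hnfin : n Bᶜ ≠ ⊤ := measure_ne_top _ _
  have htv : tvDist μ ν = (p Set.univ).toReal + (n Set.univ).toReal := by
    rw [tvDist, SignedMeasure.totalVariation, Measure.add_apply,
      ENNReal.toReal_add (measure_ne_top _ _) (measure_ne_top _ _)]
  rw [htv]
  have h3 : (p B).toReal ≤ (p Set.univ).toReal :=
    ENNReal.toReal_mono (measure_ne_top _ _) (measure_mono (Set.subset_univ _))
  have h4 : (n Bᶜ).toReal ≤ (n Set.univ).toReal :=
    ENNReal.toReal_mono (measure_ne_top _ _) (measure_mono (Set.subset_univ _))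
  have h5 : 0 ≤ (n B).toReal := ENNReal.toReal_nonneg
  have h6 : 0 ≤ (p Bᶜ).toReal := ENNReal.toReal_nonneg
  simp only [← hs, ← hp, ← hn] at h1 h2
  linarith

lemma exists_tvDist_set (μ ν : Measure X) [IsFiniteMeasure μ] [IsFiniteMeasure ν] :
    ∃ E : Set X, MeasurableSet E ∧
      tvDist μ ν = (μ E).toReal - (ν E).toReal + ((ν Eᶜ).toReal - (μ Eᶜ).toReal) ∧
      ν.restrict E ≤ μ.restrict E ∧ μ.restrict Eᶜ ≤ ν.restrict Eᶜ := by
  set s := μ.toSignedMeasure - ν.toSignedMeasure with hs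
  set p := s.toJordanDecomposition.posPart with hp
  set n := s.toJordanDecomposition.negPart with hn
  obtain ⟨T, hT, hpT, hnT⟩ := s.toJordanDecomposition.mutuallySingular
  refine ⟨Tᶜ, hT.compl, ?_, ?_, ?_⟩
  · have h1 := aux_apply μ ν hT.compl
    have h2 := aux_apply μ ν hT.compl.compl
    simp only [← hs, ← hp, ← hn, compl_compl] at h1 h2 ⊢
    have hnTc : n Tᶜ = 0 := hnT
    have hpuniv : p Tᶜ = p Set.univ := by
      have : p Set.univ = p T + p Tᶜ := by
        rw [← measure_union (disjoint_compl_right) hT.compl, Set.union_compl_self]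
      rw [this, hpT, zero_add]
    have hnuniv : n T = n Set.univ := by
      have : n Set.univ = n T + n Tᶜ := by
        rw [← measure_union (disjoint_compl_right) hT.compl, Set.union_compl_self]
      rw [this, hnTc, add_zero]
    have htv : tvDist μ ν = (p Set.univ).toReal + (n Set.univ).toReal := by
      rw [tvDist, SignedMeasure.totalVariation, Measure.add_apply,
        ENNReal.toReal_add (measure_ne_top _ _) (measure_ne_top _ _)]
    have e1 : (p Tᶜ).toReal = (p Set.univ).toReal := by rw [hpuniv]
    have e2 : (n T).toReal = (n Set.univ).toReal := by rw [hnuniv]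
    have e3 : (n Tᶜ).toReal = 0 := by rw [hnTc]; simp
    have e4 : (p T).toReal = 0 := by rw [hpT]; simp
    rw [htv]
    linarith
  · rw [Measure.le_iff]
    intro B hB
    rw [Measure.restrict_apply hB, Measure.restrict_apply hB]
    have hBE : MeasurableSet (B ∩ Tᶜ) := hB.inter hT.compl
    have h1 := aux_apply μ ν hBE
    have hn0 : n (B ∩ Tᶜ) = 0 := measure_mono_null (Set.inter_subset_right) hnT
    rw [hn0] at h1
    simp only [ENNReal.toReal_zero, sub_zero] at h1
    have : (ν (B ∩ Tᶜ)).toReal ≤ (μ (B ∩ Tᶜ)).toReal := by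
      have := ENNReal.toReal_nonneg (a := p (B ∩ Tᶜ))
      linarith
    exact (ENNReal.toReal_le_toReal (measure_ne_top _ _) (measure_ne_top _ _)).mp this
  · rw [Measure.le_iff]
    intro B hB
    rw [Measure.restrict_apply hB, Measure.restrict_apply hB, compl_compl]
    have hBE : MeasurableSet (B ∩ T) := hB.inter hT
    have h1 := aux_apply μ ν hBE
    have hp0 : p (B ∩ T) = 0 := measure_mono_null (Set.inter_subset_right) hpT
    rw [hp0] at h1
    simp only [ENNReal.toReal_zero, zero_sub] at h1
    have : (μ (B ∩ T)).toReal ≤ (ν (B ∩ T)).toReal := by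
      have := ENNReal.toReal_nonneg (a := n (B ∩ T))
      linarith
    exact (ENNReal.toReal_le_toReal (measure_ne_top _ _) (measure_ne_top _ _)).mp this

lemma integrable01 (γ : Measure X) [IsFiniteMeasure γ] {h : X → ℝ}
    (hm : Measurable h) (h1 : ∀ x, |h x| ≤ 1) : Integrable h γ :=
  Integrable.mono' (integrable_const 1) hm.aestronglyMeasurable (ae_of_all _ h1)

lemma integral_diff_le (α β : Measure X) [IsFiniteMeasure α] [IsFiniteMeasure β]
    (hle : α ≤ β) {h : X → ℝ} (hm : Measurable h) (h0 : ∀ x, 0 ≤ h x) (h1 : ∀ x, h x ≤ 1) :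
    ∫ x, h x ∂β - ∫ x, h x ∂α ≤ (β Set.univ).toReal - (α Set.univ).toReal := by
  have habs : ∀ x, |h x| ≤ 1 := fun x => abs_le.mpr ⟨by linarith [h0 x], h1 x⟩
  have hsub : β - α + α = β := Measure.sub_add_cancel_of_le hle
  have hfin : IsFiniteMeasure (β - α) := by
    constructor
    exact lt_of_le_of_lt (Measure.sub_le (μ := β) (ν := α) Set.univ) (measure_lt_top β _)
    -- fallback
  have hint : ∫ x, h x ∂β = ∫ x, h x ∂(β - α) + ∫ x, h x ∂α := by
    rw [← integral_add_measure (integrable01 _ hm habs) (integrable01 _ hm habs), hsub]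
  have hbound : ∫ x, h x ∂(β - α) ≤ ((β - α) Set.univ).toReal := by
    calc ∫ x, h x ∂(β - α) ≤ ∫ _, (1 : ℝ) ∂(β - α) :=
          integral_mono (integrable01 _ hm habs) (integrable_const 1) h1
      _ = ((β - α) Set.univ).toReal • 1 := integral_const 1
      _ = ((β - α) Set.univ).toReal := by simp
  have happ : ((β - α) Set.univ).toReal = (β Set.univ).toReal - (α Set.univ).toReal := by
    rw [Measure.sub_apply MeasurableSet.univ hle,
      ENNReal.toReal_sub_of_le (hle Set.univ) (measure_ne_top _ _)]
  linarith

lemma pair_le (μ ν : Measure X) [IsFiniteMeasure μ] [IsFiniteMeasure ν] {P : Set X}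
    (hP : MeasurableSet P) (h1 : ν.restrict P ≤ μ.restrict P)
    (h2 : μ.restrict Pᶜ ≤ ν.restrict Pᶜ) {h : X → ℝ} (hm : Measurable h)
    (h0 : ∀ x, 0 ≤ h x) (hb : ∀ x, h x ≤ 1) :
    ∫ x, h x ∂μ - ∫ x, h x ∂ν ≤ (μ P).toReal - (ν P).toReal := by
  have habs : ∀ x, |h x| ≤ 1 := fun x => abs_le.mpr ⟨by linarith [h0 x], hb x⟩
  have hiμ : Integrable h μ := integrable01 μ hm habs
  have hiν : Integrable h ν := integrable01 ν hm habs
  have hμs : ∫ x in P, h x ∂μ + ∫ x in Pᶜ, h x ∂μ = ∫ x, h x ∂μ := integral_add_compl hP hiμ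
  have hνs : ∫ x in P, h x ∂ν + ∫ x in Pᶜ, h x ∂ν = ∫ x, h x ∂ν := integral_add_compl hP hiν
  have hA : ∫ x in P, h x ∂μ - ∫ x in P, h x ∂ν ≤ (μ P).toReal - (ν P).toReal := by
    have := integral_diff_le (ν.restrict P) (μ.restrict P) h1 hm h0 hb
    simpa [Measure.restrict_apply_univ] using this
  have hB : ∫ x in Pᶜ, h x ∂μ ≤ ∫ x in Pᶜ, h x ∂ν :=
    integral_mono_measure h2 (ae_of_all _ h0) hiν.restrict
  linarith


end Helpers

/-- **One-step total variation bound for composition products.** If the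
policies `π` and `π'` are `ε`-close in total variation uniformly over states,
then the joint state–action measures `μ ⊗ₘ π` and `ν ⊗ₘ π'` are within
`ε·μ(S) + tvDist μ ν`; in particular within `ε + tvDist μ ν` when `μ` is a
probability measure. -/
theorem tvDist_compProd_le
    {S A : Type*} [MeasurableSpace S] [MeasurableSpace A]
    (μ ν : Measure S) [IsFiniteMeasure μ] [IsFiniteMeasure ν]
    (π π' : Kernel S A) [IsMarkovKernel π] [IsMarkovKernel π']
    (ε : ℝ) (hε : 0 ≤ ε)
    (hclose : ∀ s : S, tvDist (π s) (π' s) ≤ ε) :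
    tvDist (μ ⊗ₘ π) (ν ⊗ₘ π') ≤ ε * (μ Set.univ).toReal + tvDist μ ν ∧
      (IsProbabilityMeasure μ → tvDist (μ ⊗ₘ π) (ν ⊗ₘ π') ≤ ε + tvDist μ ν) := by
  have main : tvDist (μ ⊗ₘ π) (ν ⊗ₘ π') ≤ ε * (μ Set.univ).toReal + tvDist μ ν := by
    obtain ⟨E, hE, hEeq, -, -⟩ := exists_tvDist_set (μ ⊗ₘ π) (ν ⊗ₘ π')
    obtain ⟨P, hP, hPeq, hP1, hP2⟩ := exists_tvDist_set μ ν
    set f : S → ℝ := fun s => (π s (Prod.mk s ⁻¹' E)).toReal with hfdef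
    set f' : S → ℝ := fun s => (π' s (Prod.mk s ⁻¹' E)).toReal with hf'def
    set g : S → ℝ := fun s => (π s (Prod.mk s ⁻¹' Eᶜ)).toReal with hgdef
    set g' : S → ℝ := fun s => (π' s (Prod.mk s ⁻¹' Eᶜ)).toReal with hg'def
    -- measurability
    have hmf : Measurable f := (Kernel.measurable_kernel_prodMk_left hE).ennreal_toReal
    have hmf' : Measurable f' := (Kernel.measurable_kernel_prodMk_left hE).ennreal_toReal
    have hmg : Measurable g := (Kernel.measurable_kernel_prodMk_left hE.compl).ennreal_toReal
    have hmg' : Measurable g' := (Kernel.measurable_kernel_prodMk_left hE.compl).ennreal_toReal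
    -- bounds
    have hbdd : ∀ (κ : Kernel S A), ∀ (_ : IsMarkovKernel κ), ∀ (s : S) (B : Set A),
        (κ s B).toReal ≤ 1 := by
      intro κ hκ s B
      have h := prob_le_one (μ := κ s) (s := B)
      simpa using ENNReal.toReal_mono (by simp) h
    have hf0 : ∀ s, 0 ≤ f s := fun s => ENNReal.toReal_nonneg
    have hf1 : ∀ s, f s ≤ 1 := fun s => hbdd π ‹_› s _
    have hf'0 : ∀ s, 0 ≤ f' s := fun s => ENNReal.toReal_nonneg
    have hf'1 : ∀ s, f' s ≤ 1 := fun s => hbdd π' ‹_› s _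
    have hg0 : ∀ s, 0 ≤ g s := fun s => ENNReal.toReal_nonneg
    have hg1 : ∀ s, g s ≤ 1 := fun s => hbdd π ‹_› s _
    have hg'0 : ∀ s, 0 ≤ g' s := fun s => ENNReal.toReal_nonneg
    have hg'1 : ∀ s, g' s ≤ 1 := fun s => hbdd π' ‹_› s _
    have habs : ∀ (h : S → ℝ), (∀ s, 0 ≤ h s) → (∀ s, h s ≤ 1) → ∀ s, |h s| ≤ 1 :=
      fun h h0 h1 s => abs_le.mpr ⟨by linarith [h0 s], h1 s⟩
    -- integral identities
    have hlt : ∀ (κ : Kernel S A), ∀ (_ : IsMarkovKernel κ), ∀ (B : Set (S × A)),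
        ∀ᵐ s ∂μ, κ s (Prod.mk s ⁻¹' B) < ⊤ := by
      intro κ hκ B
      exact ae_of_all _ fun s => lt_of_le_of_lt prob_le_one ENNReal.one_lt_top
    have hc1 : ((μ ⊗ₘ π) E).toReal = ∫ s, f s ∂μ := by
      rw [Measure.compProd_apply hE,
        ← integral_toReal (Kernel.measurable_kernel_prodMk_left hE).aemeasurable
          (ae_of_all _ fun s => lt_of_le_of_lt prob_le_one ENNReal.one_lt_top)]
    have hc2 : ((ν ⊗ₘ π') E).toReal = ∫ s, f' s ∂ν := by
      rw [Measure.compProd_apply hE,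
        ← integral_toReal (Kernel.measurable_kernel_prodMk_left hE).aemeasurable
          (ae_of_all _ fun s => lt_of_le_of_lt prob_le_one ENNReal.one_lt_top)]
    have hc3 : ((μ ⊗ₘ π) Eᶜ).toReal = ∫ s, g s ∂μ := by
      rw [Measure.compProd_apply hE.compl,
        ← integral_toReal (Kernel.measurable_kernel_prodMk_left hE.compl).aemeasurable
          (ae_of_all _ fun s => lt_of_le_of_lt prob_le_one ENNReal.one_lt_top)]
    have hc4 : ((ν ⊗ₘ π') Eᶜ).toReal = ∫ s, g' s ∂ν := by
      rw [Measure.compProd_apply hE.compl,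
        ← integral_toReal (Kernel.measurable_kernel_prodMk_left hE.compl).aemeasurable
          (ae_of_all _ fun s => lt_of_le_of_lt prob_le_one ENNReal.one_lt_top)]
    -- fiberwise bound
    have hfiber : ∀ s, f s - f' s + (g' s - g s) ≤ ε := by
      intro s
      have h := tvDist_ge (π s) (π' s) (B := Prod.mk s ⁻¹' E) (measurable_prodMk_left hE)
      rw [← Set.preimage_compl] at h
      exact le_trans h (hclose s)
    -- term 1
    have hif : Integrable f μ := integrable01 μ hmf (habs f hf0 hf1)
    have hif' : Integrable f' μ := integrable01 μ hmf' (habs f' hf'0 hf'1)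
    have hig : Integrable g μ := integrable01 μ hmg (habs g hg0 hg1)
    have hig' : Integrable g' μ := integrable01 μ hmg' (habs g' hg'0 hg'1)
    have hint1 : Integrable (fun s => f s - f' s + (g' s - g s)) μ :=
      (hif.sub hif').add (hig'.sub hig)
    have hT1 : ∫ s, (f s - f' s + (g' s - g s)) ∂μ ≤ ε * (μ Set.univ).toReal := by
      calc ∫ s, (f s - f' s + (g' s - g s)) ∂μ ≤ ∫ _, ε ∂μ :=
            integral_mono hint1 (integrable_const ε) hfiber
        _ = (μ Set.univ).toReal • ε := integral_const ε
        _ = ε * (μ Set.univ).toReal := by rw [smul_eq_mul, mul_comm]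
    have hT1eq : ∫ s, (f s - f' s + (g' s - g s)) ∂μ =
        ∫ s, f s ∂μ - ∫ s, f' s ∂μ + (∫ s, g' s ∂μ - ∫ s, g s ∂μ) := by
      have e1 := integral_add (μ := μ) (f := fun s => f s - f' s) (g := fun s => g' s - g s)
        (hif.sub hif') (hig'.sub hig)
      rw [e1, integral_sub hif hif', integral_sub hig' hig]
    -- term 2 and 3
    have hT2 : ∫ s, f' s ∂μ - ∫ s, f' s ∂ν ≤ (μ P).toReal - (ν P).toReal :=
      pair_le μ ν hP hP1 hP2 hmf' hf'0 hf'1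
    have hT3 : ∫ s, g' s ∂ν - ∫ s, g' s ∂μ ≤ (ν Pᶜ).toReal - (μ Pᶜ).toReal := by
      have h1' : μ.restrict Pᶜ ≤ ν.restrict Pᶜ := hP2
      have h2' : ν.restrict Pᶜᶜ ≤ μ.restrict Pᶜᶜ := by rw [compl_compl]; exact hP1
      exact pair_le ν μ hP.compl h1' h2' hmg' hg'0 hg'1
    rw [hEeq, hc1, hc2, hc3, hc4, hPeq]
    linarith
  refine ⟨main, fun hprob => ?_⟩
  have : (μ Set.univ).toReal = 1 := by simp
  rw [this, mul_one] at main
  exact main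
end

section
/- Let S and A be measurable spaces, μ₀ a probability measure on S, κ a Markov kernel from S × A to S (the transition kernel), and π, π' Markov kernels from S to A (two policies) such that for every s ∈ S the total variation distance between π(s) and π'(s) is at most ε ≥ 0. Define the state–action distributions p₀ = μ₀ ⊗ π and p_{t+1} = (p_t.bind κ) ⊗ π for the first policy, and q₀ = μ₀ ⊗ π', q_{t+1} = (q_t.bind κ) ⊗ π' for the second. For γ ∈ [0,1) define the occupation measures ρ = ∑_{t=0}^∞ ((1−γ)γ^t) • p_t and ρ' = ∑_{t=0}^∞ ((1−γ)γ^t) • q_t on S × A. Then the total variation distance between ρ and ρ' satisfies ‖ρ − ρ'‖_TV ≤ ε / (1 − γ). -/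
open MeasureTheory ProbabilityTheory

/-!
With truncated measure subtraction, the Jordan decomposition of `μ - ν` is `(μ - ν, ν - μ)`, so
the total variation distance is `(μ - ν) univ + (ν - μ) univ`, where `(μ - ν) univ` is the least
`c` with `μ s ≤ c + ν s` for all `s`. In this form the distance is subadditive, does not increase
under a Markov kernel, is at most the weighted sum of the distances for weighted sums of measures,
and grows by at most `ε` when the policy in a composition-product is changed. Hence the time-`t`
distributions are `(t + 1) ε`-close, and `∑ (1 - γ) γ^t (t + 1) = 1 / (1 - γ)`.
-/

open scoped ENNReal

namespace MeasureTheory.Measure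

variable {α β : Type*} [MeasurableSpace α] [MeasurableSpace β]

lemma le_sub_add (μ ν : Measure α) [IsFiniteMeasure μ] [IsFiniteMeasure ν] : μ ≤ μ - ν + ν :=
  sub_le_iff_le_add.1 le_rfl

lemma le_sub_apply_univ_add (μ ν : Measure α) [IsFiniteMeasure μ] [IsFiniteMeasure ν]
    (s : Set α) : μ s ≤ (μ - ν) Set.univ + ν s :=
  calc μ s ≤ (μ - ν + ν) s := le_sub_add μ ν s
    _ ≤ (μ - ν) Set.univ + ν s := add_le_add_left (measure_mono (Set.subset_univ s)) _

lemma sub_apply_univ_le_of_forall_le_add {μ ν : Measure α} [IsFiniteMeasure μ]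
    [IsFiniteMeasure ν] {c : ℝ≥0∞} (h : ∀ s, MeasurableSet s → μ s ≤ c + ν s) :
    (μ - ν) Set.univ ≤ c := by
  obtain ⟨s, hs⟩ := exists_isHahnDecomposition μ ν
  have hsc : (μ - ν) sᶜ = μ sᶜ - ν sᶜ := by
    rw [← restrict_apply_univ, restrict_sub_eq_restrict_sub_restrict hs.measurableSet.compl,
      sub_apply MeasurableSet.univ hs.ge_on_compl, restrict_apply_univ, restrict_apply_univ]
  calc (μ - ν) Set.univ ≤ (μ - ν) s + (μ - ν) sᶜ := by
        rw [← Set.union_compl_self s]; exact measure_union_le _ _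
    _ = μ sᶜ - ν sᶜ := by rw [sub_apply_eq_zero_of_isHahnDecomposition hs, zero_add, hsc]
    _ ≤ c := tsub_le_iff_right.2 (h _ hs.measurableSet.compl)

lemma sub_le_sub_add_sub (μ ν ξ : Measure α) [IsFiniteMeasure μ] [IsFiniteMeasure ν]
    [IsFiniteMeasure ξ] : μ - ξ ≤ (μ - ν) + (ν - ξ) :=
  sub_le_of_le_add <| calc
    μ ≤ (μ - ν) + ν := le_sub_add μ ν
    _ ≤ (μ - ν) + ((ν - ξ) + ξ) := add_le_add_right (le_sub_add ν ξ) _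
    _ = (μ - ν) + (ν - ξ) + ξ := (add_assoc _ _ _).symm

lemma comp_mono {μ ν : Measure α} (h : μ ≤ ν) (κ : Kernel α β) : κ ∘ₘ μ ≤ κ ∘ₘ ν :=
  le_iff.2 fun s hs => by
    rw [bind_apply hs κ.aemeasurable, bind_apply hs κ.aemeasurable]
    exact lintegral_mono' h le_rfl

lemma comp_sub_comp_le (μ ν : Measure α) [IsFiniteMeasure μ] [IsFiniteMeasure ν]
    (κ : Kernel α β) : κ ∘ₘ μ - κ ∘ₘ ν ≤ κ ∘ₘ (μ - ν) :=
  sub_le_of_le_add <| (comp_mono (le_sub_add μ ν) κ).trans_eq comp_add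

lemma comp_sub_comp_apply_univ_le (μ ν : Measure α) [IsFiniteMeasure μ] [IsFiniteMeasure ν]
    (κ : Kernel α β) [IsMarkovKernel κ] :
    (κ ∘ₘ μ - κ ∘ₘ ν) Set.univ ≤ (μ - ν) Set.univ :=
  (comp_sub_comp_le μ ν κ Set.univ).trans_eq comp_apply_univ

lemma compProd_sub_compProd_apply_univ_le (μ : Measure α) [IsFiniteMeasure μ]
    (κ η : Kernel α β) [IsFiniteKernel κ] [IsFiniteKernel η] :
    (μ ⊗ₘ κ - μ ⊗ₘ η) Set.univ ≤ ∫⁻ a, (κ a - η a) Set.univ ∂μ := by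
  refine sub_apply_univ_le_of_forall_le_add fun s hs => ?_
  rw [compProd_apply hs, compProd_apply hs,
    ← lintegral_add_right _ (Kernel.measurable_kernel_prodMk_left hs)]
  exact lintegral_mono fun a => le_sub_apply_univ_add _ _ _

lemma sum_smul_sub_sum_smul_apply_univ_le {ι : Type*} (w : ι → ℝ≥0∞) (μ ν : ι → Measure α)
    [∀ i, IsFiniteMeasure (μ i)] [∀ i, IsFiniteMeasure (ν i)] :
    (sum (fun i => w i • μ i) - sum fun i => w i • ν i) Set.univ
      ≤ ∑' i, w i * (μ i - ν i) Set.univ := by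
  have hle : sum (fun i => w i • μ i) - sum (fun i => w i • ν i)
      ≤ sum fun i => w i • (μ i - ν i) := by
    refine sub_le_of_le_add <| le_iff.2 fun s hs => ?_
    simp only [add_apply, sum_apply _ hs, smul_apply, smul_eq_mul, ← ENNReal.tsum_add, ← mul_add]
    exact ENNReal.tsum_le_tsum fun i => by gcongr; exact le_sub_add (μ i) (ν i) s
  simpa [sum_apply] using hle Set.univ

end MeasureTheory.Measure

noncomputable def etvDist {X : Type*} [MeasurableSpace X] (μ ν : Measure X) : ℝ≥0∞ :=
  (μ - ν) Set.univ + (ν - μ) Set.univ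

section etvDist

variable {α β : Type*} [MeasurableSpace α] [MeasurableSpace β]

lemma tvDist_eq_toReal_etvDist (μ ν : Measure α) [IsFiniteMeasure μ] [IsFiniteMeasure ν] :
    tvDist μ ν = (etvDist μ ν).toReal := by
  rw [tvDist, SignedMeasure.totalVariation, Measure.toJordanDecomposition_toSignedMeasure_sub]
  rfl

lemma etvDist_ne_top (μ ν : Measure α) [IsFiniteMeasure μ] [IsFiniteMeasure ν] :
    etvDist μ ν ≠ ∞ := by
  unfold etvDist; finiteness

@[simp] lemma etvDist_self (μ : Measure α) : etvDist μ μ = 0 := by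
  simp [etvDist, Measure.sub_self]

lemma etvDist_triangle (μ ν ξ : Measure α) [IsFiniteMeasure μ] [IsFiniteMeasure ν]
    [IsFiniteMeasure ξ] : etvDist μ ξ ≤ etvDist μ ν + etvDist ν ξ :=
  calc etvDist μ ξ
      ≤ ((μ - ν) + (ν - ξ)) Set.univ + ((ξ - ν) + (ν - μ)) Set.univ :=
        add_le_add (Measure.sub_le_sub_add_sub μ ν ξ _) (Measure.sub_le_sub_add_sub ξ ν μ _)
    _ = etvDist μ ν + etvDist ν ξ := by
        simp only [etvDist, Measure.add_apply]; ring

lemma etvDist_comp_le (μ ν : Measure α) [IsFiniteMeasure μ] [IsFiniteMeasure ν]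
    (κ : Kernel α β) [IsMarkovKernel κ] : etvDist (κ ∘ₘ μ) (κ ∘ₘ ν) ≤ etvDist μ ν :=
  add_le_add (Measure.comp_sub_comp_apply_univ_le μ ν κ)
    (Measure.comp_sub_comp_apply_univ_le ν μ κ)

lemma etvDist_compProd_left_le (μ ν : Measure α) [IsFiniteMeasure μ] [IsFiniteMeasure ν]
    (κ : Kernel α β) [IsMarkovKernel κ] : etvDist (μ ⊗ₘ κ) (ν ⊗ₘ κ) ≤ etvDist μ ν := by
  rw [Measure.compProd_eq_comp_prod, Measure.compProd_eq_comp_prod]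
  exact etvDist_comp_le μ ν _

/-- The integrands `a ↦ (κ a - η a) univ` need not be measurable; `le_lintegral_add` (the lower
integral is superadditive) does not require it. -/
lemma etvDist_compProd_right_le (μ : Measure α) [IsFiniteMeasure μ]
    (κ η : Kernel α β) [IsFiniteKernel κ] [IsFiniteKernel η] :
    etvDist (μ ⊗ₘ κ) (μ ⊗ₘ η) ≤ ∫⁻ a, etvDist (κ a) (η a) ∂μ :=
  (add_le_add (Measure.compProd_sub_compProd_apply_univ_le μ κ η)
    (Measure.compProd_sub_compProd_apply_univ_le μ η κ)).trans (le_lintegral_add _ _)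

lemma etvDist_compProd_le (μ ν : Measure α) [IsFiniteMeasure μ] [IsProbabilityMeasure ν]
    (κ η : Kernel α β) [IsMarkovKernel κ] [IsFiniteKernel η] {c : ℝ≥0∞}
    (hc : ∀ a, etvDist (κ a) (η a) ≤ c) : etvDist (μ ⊗ₘ κ) (ν ⊗ₘ η) ≤ etvDist μ ν + c :=
  calc etvDist (μ ⊗ₘ κ) (ν ⊗ₘ η) ≤ etvDist (μ ⊗ₘ κ) (ν ⊗ₘ κ) + etvDist (ν ⊗ₘ κ) (ν ⊗ₘ η) :=
        etvDist_triangle _ _ _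
    _ ≤ etvDist μ ν + ∫⁻ _, c ∂ν :=
        add_le_add (etvDist_compProd_left_le μ ν κ)
          ((etvDist_compProd_right_le ν κ η).trans (lintegral_mono hc))
    _ = etvDist μ ν + c := by simp

lemma etvDist_sum_smul_le {ι : Type*} (w : ι → ℝ≥0∞) (μ ν : ι → Measure α)
    [∀ i, IsFiniteMeasure (μ i)] [∀ i, IsFiniteMeasure (ν i)] :
    etvDist (Measure.sum fun i => w i • μ i) (Measure.sum fun i => w i • ν i)
      ≤ ∑' i, w i * etvDist (μ i) (ν i) :=
  calc _ ≤ _ := add_le_add (Measure.sum_smul_sub_sum_smul_apply_univ_le w μ ν)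
        (Measure.sum_smul_sub_sum_smul_apply_univ_le w ν μ)
    _ = ∑' i, w i * etvDist (μ i) (ν i) := by
        simp only [etvDist, mul_add, ENNReal.tsum_add]

end etvDist

lemma tsum_ofReal_mul_geometric_mul_succ {γ : ℝ} (hγ₀ : 0 ≤ γ) (hγ₁ : γ < 1) :
    ∑' t : ℕ, ENNReal.ofReal ((1 - γ) * γ ^ t) * (t + 1) = ENNReal.ofReal (1 - γ)⁻¹ := by
  have hsum : HasSum (fun t : ℕ => (1 - γ) * γ ^ t * (t + 1)) (1 - γ)⁻¹ := by
    have h := (hasSum_choose_mul_geometric_of_norm_lt_one 1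
      (by rwa [Real.norm_of_nonneg hγ₀])).mul_left (1 - γ)
    have hval : (1 - γ) * (1 / (1 - γ) ^ (1 + 1)) = (1 - γ)⁻¹ := by
      field_simp [(sub_pos.2 hγ₁).ne']
    have hterm : (fun t : ℕ => (1 - γ) * (((t + 1).choose 1 : ℕ) * γ ^ t))
        = fun t : ℕ => (1 - γ) * γ ^ t * (t + 1) := by
      ext t; push_cast [Nat.choose_one_right]; ring
    rwa [hval, hterm] at h
  have hterm (t : ℕ) : ENNReal.ofReal ((1 - γ) * γ ^ t) * (t + 1)
      = ENNReal.ofReal ((1 - γ) * γ ^ t * (t + 1)) := by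
    rw [ENNReal.ofReal_mul (mul_nonneg (sub_nonneg.2 hγ₁.le) (pow_nonneg hγ₀ t))]
    exact_mod_cast (congrArg _ (ENNReal.ofReal_natCast (t + 1))).symm
  simp_rw [hterm]
  rw [← ENNReal.ofReal_tsum_of_nonneg (fun t => by have := pow_nonneg hγ₀ t; positivity)
    hsum.summable, hsum.tsum_eq]

section StateAction

variable {S A : Type*} [MeasurableSpace S] [MeasurableSpace A]

lemma isProbabilityMeasure_stateAction (μ₀ : Measure S) [IsProbabilityMeasure μ₀]
    (κ : Kernel (S × A) S) [IsMarkovKernel κ] (π : Kernel S A) [IsMarkovKernel π]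
    (p : ℕ → Measure (S × A)) (hp0 : p 0 = μ₀ ⊗ₘ π)
    (hpsucc : ∀ t, p (t + 1) = (κ ∘ₘ p t) ⊗ₘ π) (t : ℕ) : IsProbabilityMeasure (p t) := by
  induction t with
  | zero => rw [hp0]; infer_instance
  | succ t ih => rw [hpsucc]; infer_instance

lemma etvDist_stateAction_le (μ₀ : Measure S) [IsProbabilityMeasure μ₀]
    (κ : Kernel (S × A) S) [IsMarkovKernel κ] (π π' : Kernel S A) [IsMarkovKernel π]
    [IsMarkovKernel π'] {c : ℝ≥0∞} (hπ : ∀ s, etvDist (π s) (π' s) ≤ c)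
    (p q : ℕ → Measure (S × A)) (hp0 : p 0 = μ₀ ⊗ₘ π)
    (hpsucc : ∀ t, p (t + 1) = (κ ∘ₘ p t) ⊗ₘ π) (hq0 : q 0 = μ₀ ⊗ₘ π')
    (hqsucc : ∀ t, q (t + 1) = (κ ∘ₘ q t) ⊗ₘ π') (t : ℕ) :
    etvDist (p t) (q t) ≤ (t + 1) * c := by
  have := isProbabilityMeasure_stateAction μ₀ κ π p hp0 hpsucc
  have := isProbabilityMeasure_stateAction μ₀ κ π' q hq0 hqsucc
  induction t with
  | zero => simpa [hp0, hq0] using etvDist_compProd_le μ₀ μ₀ π π' hπ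
  | succ t ih =>
    calc etvDist (p (t + 1)) (q (t + 1)) ≤ etvDist (κ ∘ₘ p t) (κ ∘ₘ q t) + c := by
          rw [hpsucc, hqsucc]; exact etvDist_compProd_le _ _ π π' hπ
      _ ≤ (t + 1) * c + c := add_le_add_left ((etvDist_comp_le _ _ κ).trans ih) _
      _ = ((t + 1 : ℕ) + 1) * c := by push_cast; ring

end StateAction

/-- **Lemma 1: occupation measures of `ε`-close policies are `ε/(1-γ)`-close
in total variation.** Here `p t` (resp. `q t`) is the time-`t` state–action
distribution generated from the initial distribution `μ₀`, the transition
kernel `κ`, and the policy `π` (resp. the `ε`-close policy `π'`), and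
`ρ, ρ'` are the corresponding discounted occupation measures. -/
theorem tvDist_occupation_measures_le
    {S A : Type*} [MeasurableSpace S] [MeasurableSpace A]
    (μ₀ : Measure S) [IsProbabilityMeasure μ₀]
    (κ : Kernel (S × A) S) [IsMarkovKernel κ]
    (π π' : Kernel S A) [IsMarkovKernel π] [IsMarkovKernel π']
    (ε : ℝ) (hε : 0 ≤ ε)
    (hclose : ∀ s : S, tvDist (π s) (π' s) ≤ ε)
    (γ : ℝ) (hγ₀ : 0 ≤ γ) (hγ₁ : γ < 1)
    (p q : ℕ → Measure (S × A))
    (hp0 : p 0 = μ₀ ⊗ₘ π)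
    (hpsucc : ∀ t, p (t + 1) = ((p t).bind fun sa => κ sa) ⊗ₘ π)
    (hq0 : q 0 = μ₀ ⊗ₘ π')
    (hqsucc : ∀ t, q (t + 1) = ((q t).bind fun sa => κ sa) ⊗ₘ π')
    (ρ ρ' : Measure (S × A))
    (hρ : ρ = Measure.sum fun t => (ENNReal.ofReal ((1 - γ) * γ ^ t)) • p t)
    (hρ' : ρ' = Measure.sum fun t => (ENNReal.ofReal ((1 - γ) * γ ^ t)) • q t)
    [IsFiniteMeasure ρ] [IsFiniteMeasure ρ'] :
    tvDist ρ ρ' ≤ ε / (1 - γ) := by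
  have := isProbabilityMeasure_stateAction μ₀ κ π p hp0 hpsucc
  have := isProbabilityMeasure_stateAction μ₀ κ π' q hq0 hqsucc
  have hπ (s : S) : etvDist (π s) (π' s) ≤ ENNReal.ofReal ε :=
    (ENNReal.le_ofReal_iff_toReal_le (etvDist_ne_top _ _) hε).2
      ((tvDist_eq_toReal_etvDist _ _).symm.trans_le (hclose s))
  have hρρ' : etvDist ρ ρ' ≤ ENNReal.ofReal (ε / (1 - γ)) :=
    calc etvDist ρ ρ' ≤ ∑' t : ℕ, ENNReal.ofReal ((1 - γ) * γ ^ t) * etvDist (p t) (q t) := by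
          rw [hρ, hρ']; exact etvDist_sum_smul_le _ p q
      _ ≤ ∑' t : ℕ, ENNReal.ofReal ((1 - γ) * γ ^ t) * (t + 1) * ENNReal.ofReal ε :=
          ENNReal.tsum_le_tsum fun t => by
            rw [mul_assoc]
            gcongr
            exact etvDist_stateAction_le μ₀ κ π π' hπ p q hp0 hpsucc hq0 hqsucc t
      _ = ENNReal.ofReal (ε / (1 - γ)) := by
          rw [ENNReal.tsum_mul_right, tsum_ofReal_mul_geometric_mul_succ hγ₀ hγ₁,
            ← ENNReal.ofReal_mul (inv_nonneg.2 (sub_nonneg.2 hγ₁.le)), inv_mul_eq_div]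
  rw [tvDist_eq_toReal_etvDist]
  exact ENNReal.toReal_le_of_le_ofReal (div_nonneg hε (sub_nonneg.2 hγ₁.le)) hρρ'
end

section
/- Let Θ be a nonempty type, V₀ : Θ → ℝ, V : Θ → ℝ^m, c ∈ ℝ^m, L(θ, λ) = V₀(θ) + ∑_{i=1}^m λᵢ (Vᵢ(θ) − cᵢ), and d(λ) = sup_{θ ∈ Θ} L(θ, λ), assumed finite for all λ ≥ 0. Let δ ≥ 0 and θ† : ℝ^m → Θ satisfy d(λ) ≤ L(θ†(λ), λ) + δ for every λ ≥ 0, and suppose ‖V(θ†(λ)) − c‖² ≤ B for every λ ≥ 0. Let η > 0 and let [x]₊ denote the coordinatewise positive part (([x]₊)ᵢ = max(xᵢ, 0)). Then for every λ ≥ 0 and every λ* ≥ 0, the projected dual step λ' = [λ − η (V(θ†(λ)) − c)]₊ satisfies ‖λ' − λ*‖² ≤ ‖λ − λ*‖² + 2η ( δ + d(λ*) − d(λ) ) + η² B, where ‖·‖ is the Euclidean norm on ℝ^m. -/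
/-!
The projected point `[λ − η g]₊` is no farther from the nonnegative `λ*` than `λ − η g` is, since
clipping at `0` moves each coordinate towards the nonnegative orthant. Expanding
`‖(λ − λ*) − η g‖²` gives `‖λ − λ*‖² + 2η⟪λ* − λ, g⟫ + η²‖g‖²`, and `g = V(θ†(λ)) − c` is a
`δ`-supergradient of the dual function at `λ`: `d(λ*) ≥ L(θ†(λ), λ*) = L(θ†(λ), λ) + ⟪λ* − λ, g⟫
≥ d(λ) − δ + ⟪λ* − λ, g⟫`.
-/

open RealInnerProductSpace Set

section Projection

variable {ι : Type*} [Fintype ι]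

theorem EuclideanSpace.norm_toLp_max_zero_sub_le (x y : EuclideanSpace ℝ ι) (hy : ∀ i, 0 ≤ y i) :
    ‖(WithLp.toLp 2 fun i => max (x i) 0 : EuclideanSpace ℝ ι) - y‖ ≤ ‖x - y‖ := by
  rw [EuclideanSpace.norm_eq, EuclideanSpace.norm_eq]
  refine Real.sqrt_le_sqrt (Finset.sum_le_sum fun i _ => ?_)
  simp only [PiLp.sub_apply, Real.norm_eq_abs]
  calc |max (x i) 0 - y i| ^ 2 = |max (x i) 0 - max (y i) 0| ^ 2 := by rw [max_eq_left (hy i)]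
    _ ≤ |x i - y i| ^ 2 := pow_le_pow_left₀ (abs_nonneg _) (abs_max_sub_max_le_abs _ _ _) 2

end Projection

theorem norm_sub_sq_le_of_norm_sub_le_norm_sub_smul {E : Type*} [NormedAddCommGroup E]
    [InnerProductSpace ℝ E] {x y g p : E} {η : ℝ} (hp : ‖p - y‖ ≤ ‖x - η • g - y‖) :
    ‖p - y‖ ^ 2 ≤ ‖x - y‖ ^ 2 + 2 * η * ⟪y - x, g⟫ + η ^ 2 * ‖g‖ ^ 2 := by
  have hexpand : ‖x - η • g - y‖ ^ 2 = ‖x - y‖ ^ 2 + 2 * η * ⟪y - x, g⟫ + η ^ 2 * ‖g‖ ^ 2 := by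
    rw [show x - η • g - y = (x - y) - η • g by abel, norm_sub_sq_real, real_inner_smul_right,
      norm_smul, Real.norm_eq_abs, mul_pow, sq_abs, ← neg_sub y x, inner_neg_left]
    ring
  exact hexpand ▸ pow_le_pow_left₀ (norm_nonneg _) hp 2

section Duality

variable {Θ ι : Type*} [Fintype ι] (V₀ : Θ → ℝ) (V : Θ → ι → ℝ) (c : ι → ℝ)

def lagrangian (l : EuclideanSpace ℝ ι) (θ : Θ) : ℝ :=
  V₀ θ + ∑ i, l i * (V θ i - c i)

/-- `d(λ) = sup_θ L(θ, λ)`, meaningful only where the range is bounded above. -/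
noncomputable def dualFunction (l : EuclideanSpace ℝ ι) : ℝ :=
  sSup (range (lagrangian V₀ V c l))

def constraintViolation (θ : Θ) : EuclideanSpace ℝ ι :=
  WithLp.toLp 2 fun i => V θ i - c i

theorem lagrangian_sub_lagrangian (l l' : EuclideanSpace ℝ ι) (θ : Θ) :
    lagrangian V₀ V c l' θ - lagrangian V₀ V c l θ = ⟪l' - l, constraintViolation V c θ⟫ := by
  simp only [lagrangian, constraintViolation, PiLp.inner_apply, PiLp.sub_apply,
    RCLike.inner_apply, conj_trivial, add_sub_add_left_eq_sub, ← Finset.sum_sub_distrib]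
  exact Finset.sum_congr rfl fun i _ => by ring

variable {V₀ V c}

/-- An approximate maximiser `θ` of `L(·, λ)` yields a `δ`-supergradient of `d` at `λ`. -/
theorem dualFunction_add_inner_sub_le {l l' : EuclideanSpace ℝ ι} {θ : Θ} {δ : ℝ}
    (hbdd : BddAbove (range (lagrangian V₀ V c l')))
    (happrox : dualFunction V₀ V c l ≤ lagrangian V₀ V c l θ + δ) :
    dualFunction V₀ V c l + ⟪l' - l, constraintViolation V c θ⟫ - δ ≤ dualFunction V₀ V c l' := by
  have hθ : lagrangian V₀ V c l' θ ≤ dualFunction V₀ V c l' := le_csSup hbdd ⟨θ, rfl⟩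
  linarith [lagrangian_sub_lagrangian V₀ V c l l' θ]

end Duality

theorem dual_descent_step_inequality_general
    {Θ : Type*} {m : ℕ}
    (V₀ : Θ → ℝ) (V : Θ → Fin m → ℝ) (c : Fin m → ℝ)
    (hbdd : ∀ l : EuclideanSpace ℝ (Fin m), (∀ i, 0 ≤ l i) →
      BddAbove (Set.range fun θ => V₀ θ + ∑ i, l i * (V θ i - c i)))
    (δ : ℝ)
    (θd : EuclideanSpace ℝ (Fin m) → Θ)
    (happrox : ∀ l : EuclideanSpace ℝ (Fin m), (∀ i, 0 ≤ l i) →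
      sSup (Set.range fun θ => V₀ θ + ∑ i, l i * (V θ i - c i)) ≤
        (V₀ (θd l) + ∑ i, l i * (V (θd l) i - c i)) + δ)
    (B : ℝ)
    (hB : ∀ l : EuclideanSpace ℝ (Fin m), (∀ i, 0 ≤ l i) →
      ‖(show EuclideanSpace ℝ (Fin m) from WithLp.toLp 2 (fun i => V (θd l) i - c i))‖ ^ 2 ≤ B)
    (η : ℝ) (hη : 0 < η)
    (l lstar : EuclideanSpace ℝ (Fin m))
    (hl : ∀ i, 0 ≤ l i) (hlstar : ∀ i, 0 ≤ lstar i) :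
    ‖(show EuclideanSpace ℝ (Fin m) from
          WithLp.toLp 2 (fun i => max (l i - η * (V (θd l) i - c i)) 0)) - lstar‖ ^ 2 ≤
      ‖l - lstar‖ ^ 2 +
        2 * η * (δ +
          sSup (Set.range fun θ => V₀ θ + ∑ i, lstar i * (V θ i - c i)) -
          sSup (Set.range fun θ => V₀ θ + ∑ i, l i * (V θ i - c i))) +
        η ^ 2 * B := by
  set g := constraintViolation V c (θd l)
  have hstep := norm_sub_sq_le_of_norm_sub_le_norm_sub_smul
    (EuclideanSpace.norm_toLp_max_zero_sub_le (l - η • g) lstar hlstar)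
  have hsuper : dualFunction V₀ V c l + ⟪lstar - l, g⟫ - δ ≤ dualFunction V₀ V c lstar :=
    dualFunction_add_inner_sub_le (hbdd lstar hlstar) (happrox l hl)
  have hg : η ^ 2 * ‖g‖ ^ 2 ≤ η ^ 2 * B := mul_le_mul_of_nonneg_left (hB l hl) (sq_nonneg η)
  have hinner := mul_le_mul_of_nonneg_left hsuper (by positivity : (0 : ℝ) ≤ 2 * η)
  exact hstep.trans (by unfold dualFunction lagrangian at hinner; linarith)

/-- **One-step descent inequality for the projected approximate dual gradient
step** (proof of Theorem 3). A projected step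
`λ' = [λ − η (V(θ†(λ)) − c)]₊` using the `δ`-approximate supergradient
`V(θ†(λ)) − c` of the dual function `d` satisfies
`‖λ' − λ*‖² ≤ ‖λ − λ*‖² + 2η(δ + d(λ*) − d(λ)) + η² B`. -/
theorem dual_descent_step_inequality
    {Θ : Type*} [Nonempty Θ] {m : ℕ}
    (V₀ : Θ → ℝ) (V : Θ → Fin m → ℝ) (c : Fin m → ℝ)
    (hbdd : ∀ l : EuclideanSpace ℝ (Fin m), (∀ i, 0 ≤ l i) →
      BddAbove (Set.range fun θ => V₀ θ + ∑ i, l i * (V θ i - c i)))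
    (δ : ℝ) (hδ : 0 ≤ δ)
    (θd : EuclideanSpace ℝ (Fin m) → Θ)
    (happrox : ∀ l : EuclideanSpace ℝ (Fin m), (∀ i, 0 ≤ l i) →
      sSup (Set.range fun θ => V₀ θ + ∑ i, l i * (V θ i - c i)) ≤
        (V₀ (θd l) + ∑ i, l i * (V (θd l) i - c i)) + δ)
    (B : ℝ)
    (hB : ∀ l : EuclideanSpace ℝ (Fin m), (∀ i, 0 ≤ l i) →
      ‖(show EuclideanSpace ℝ (Fin m) from WithLp.toLp 2 (fun i => V (θd l) i - c i))‖ ^ 2 ≤ B)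
    (η : ℝ) (hη : 0 < η)
    (l lstar : EuclideanSpace ℝ (Fin m))
    (hl : ∀ i, 0 ≤ l i) (hlstar : ∀ i, 0 ≤ lstar i) :
    ‖(show EuclideanSpace ℝ (Fin m) from
          WithLp.toLp 2 (fun i => max (l i - η * (V (θd l) i - c i)) 0)) - lstar‖ ^ 2 ≤
      ‖l - lstar‖ ^ 2 +
        2 * η * (δ +
          sSup (Set.range fun θ => V₀ θ + ∑ i, lstar i * (V θ i - c i)) -
          sSup (Set.range fun θ => V₀ θ + ∑ i, l i * (V θ i - c i))) +
        η ^ 2 * B :=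
  dual_descent_step_inequality_general V₀ V c hbdd δ θd happrox B hB η hη l lstar hl hlstar
end
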